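/- For every x ∈ {1, …, L}: e^{iθ/2} a_x Φ_{G,0} = η e^{−iθ/2} b_x† Φ_{G,0}, and e^{iθ/2} a_x Φ_{G,1} = η e^{−iθ/2} b_x† Φ_{G,1} + δ_{x,L} √(2η sin δ) e^{iθ/2} Φ_{G,0}. -/

import Mathlib

/-!
The operators `ã_y†` are dual to the `a_x`: `{a_x, ã_y†} = δ_{xy}`. Consequently
`[a_x, ζ†] = 2 Σ_z F_{x,z} ã_z† = -2 b_x†`, and `b_x†` commutes with `ζ†` because all creation
operators anticommute. Since `ζ†` is a sum of products of two of the `L` anticommuting creation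
operators, `(ζ†)^L = 0`, so the truncated exponential `E = exp(z ζ†)` obeys
`a_x E = E a_x - 2 z b_x† E`; applied to the vacuum, which `a_x` annihilates, this is the identity
for `Φ_{G,0}`. For `Φ_{G,1}` one more use of `{a_x, ã_L†} = δ_{x,L}` and `{ã_L†, b_x†} = 0` moves
`a_x` past `ã_L†`.
-/

noncomputable section

/-- `w_x = sin(δ/2)` for odd `x`, `cos(δ/2)` for even `x`. -/
def wR (δ : ℝ) (x : ℕ) : ℝ := if Odd x then Real.sin (δ/2) else Real.cos (δ/2)

/-- The antisymmetric coefficient matrix `F_{x,y}`. -/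
def Fc (L : ℕ) (δ : ℝ) (x y : ℕ) : ℂ :=
  if y = x + 1 ∨ (x = 1 ∧ y = L) then -(Real.sin δ) / 2
  else if x = y + 1 ∨ (x = L ∧ y = 1) then (Real.sin δ) / 2
  else 0

variable {V : Type*} [AddCommGroup V] [Module ℂ V]

/-- `a_x = w_{x+1} c_x − w_x c_{x+1}` for `1 ≤ x ≤ L−1`, and `a_L = w_2 c_1 + w_{L−1} c_L`. -/
def aOp (L : ℕ) (δ : ℝ) (c : ℕ → Module.End ℂ V) (x : ℕ) : Module.End ℂ V :=
  if x = L then (wR δ 2 : ℂ) • c 1 + (wR δ (L-1) : ℂ) • c L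
  else (wR δ (x+1) : ℂ) • c x - (wR δ x : ℂ) • c (x+1)

/-- `b_x = w_x c_x + w_{x+1} c_{x+1}` for `1 ≤ x ≤ L−1`, and `b_L = −w_1 c_1 + w_L c_L`. -/
def bOp (L : ℕ) (δ : ℝ) (c : ℕ → Module.End ℂ V) (x : ℕ) : Module.End ℂ V :=
  if x = L then (-(wR δ 1) : ℂ) • c 1 + (wR δ L : ℂ) • c L
  else (wR δ x : ℂ) • c x + (wR δ (x+1) : ℂ) • c (x+1)

/-- `ã_x† = (1/sin δ)(Σ_{y=1}^{x} w_y c_y† − Σ_{y=x+1}^{L} w_y c_y†)` for `1 ≤ x ≤ L−1`,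
and `ã_L† = (1/sin δ) Σ_{y=1}^{L} w_y c_y†`. -/
def taOp (L : ℕ) (δ : ℝ) (c : ℕ → Module.End ℂ V) (x : ℕ) : Module.End ℂ V :=
  if x = L then ((Real.sin δ : ℂ))⁻¹ • ∑ y ∈ Finset.Icc 1 L, (wR δ y : ℂ) • c y
  else ((Real.sin δ : ℂ))⁻¹ •
    (∑ y ∈ Finset.Icc 1 x, (wR δ y : ℂ) • c y - ∑ y ∈ Finset.Icc (x+1) L, (wR δ y : ℂ) • c y)

/-- The pair operator `ζ† = Σ_{x,y=1}^{L} F_{x,y} ã_x† ã_y†`. -/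
def zetaDag (L : ℕ) (δ : ℝ) (cdag : ℕ → Module.End ℂ V) : Module.End ℂ V :=
  ∑ x ∈ Finset.Icc 1 L, ∑ y ∈ Finset.Icc 1 L,
    Fc L δ x y • (taOp L δ cdag x * taOp L δ cdag y)

/-- `Φ_{G,0} = exp(−(η/2) e^{−iθ} ζ†) Φ0`.  Since `ζ†` is a quadratic expression in the `L`
creation operators, `(ζ†)^n = 0` for `2n > L`, so the exponential equals the finite sum
`Σ_{n=0}^{L} (1/n!) (−(η/2) e^{−iθ} ζ†)^n`. -/
def PhiG0 (L : ℕ) (δ η θ : ℝ) (cdag : ℕ → Module.End ℂ V) (Φ0 : V) : V :=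
  (∑ n ∈ Finset.range (L+1),
      (((-(η/2 : ℝ) : ℂ) * Complex.exp (-(θ : ℂ) * Complex.I))^n / (n.factorial : ℂ)) •
        (zetaDag L δ cdag)^n) Φ0

/-- `Φ_{G,1} = √(2η sin δ) ã_L† Φ_{G,0}`. -/
def PhiG1 (L : ℕ) (δ η θ : ℝ) (cdag : ℕ → Module.End ℂ V) (Φ0 : V) : V :=
  (Real.sqrt (2 * η * Real.sin δ) : ℂ) • taOp L δ cdag L (PhiG0 L δ η θ cdag Φ0)

section AnticommutingFamily

variable {ι R : Type*} [Ring R] (e : ι → R) (S : Finset ι)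

lemma mul_list_prod_eq_zero_of_mem (hanti : ∀ i ∈ S, ∀ j ∈ S, e i * e j + e j * e i = 0)
    (hsq : ∀ i ∈ S, e i * e i = 0) {i : ι} (hi : i ∈ S) :
    ∀ l : List ι, (∀ j ∈ l, j ∈ S) → i ∈ l → e i * (l.map e).prod = 0
  | [], _, h => absurd h List.not_mem_nil
  | j :: l, hl, h => by
    rw [List.map_cons, List.prod_cons, ← mul_assoc]
    rcases List.mem_cons.mp h with rfl | h
    · rw [hsq i hi, zero_mul]
    · rw [eq_neg_of_add_eq_zero_left (hanti i hi j (hl j List.mem_cons_self)), neg_mul, mul_assoc,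
        mul_list_prod_eq_zero_of_mem hanti hsq hi l
          (fun k hk => hl k (List.mem_cons_of_mem _ hk)) h, mul_zero, neg_zero]

lemma list_prod_eq_zero_of_not_nodup (hanti : ∀ i ∈ S, ∀ j ∈ S, e i * e j + e j * e i = 0)
    (hsq : ∀ i ∈ S, e i * e i = 0) :
    ∀ l : List ι, (∀ j ∈ l, j ∈ S) → ¬ l.Nodup → (l.map e).prod = 0
  | [], _, h => absurd List.nodup_nil h
  | j :: l, hl, h => by
    have hl' : ∀ k ∈ l, k ∈ S := fun k hk => hl k (List.mem_cons_of_mem _ hk)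
    rw [List.map_cons, List.prod_cons]
    rcases not_and_or.mp (List.nodup_cons.not.mp h) with h | h
    · exact mul_list_prod_eq_zero_of_mem e S hanti hsq (hl j List.mem_cons_self) l hl'
        (not_not.mp h)
    · rw [list_prod_eq_zero_of_not_nodup hanti hsq l hl' h, mul_zero]

variable {𝕜 : Type*} [CommSemiring 𝕜] [Algebra 𝕜 R]

lemma span_image_pow_eq_bot (hanti : ∀ i ∈ S, ∀ j ∈ S, e i * e j + e j * e i = 0)
    (hsq : ∀ i ∈ S, e i * e i = 0) {k : ℕ} (hk : S.card < k) :
    Submodule.span 𝕜 (e '' S) ^ k = ⊥ := by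
  rw [Submodule.span_pow, Submodule.span_eq_bot]
  intro x hx
  obtain ⟨f, rfl⟩ := Set.mem_pow.mp hx
  choose j hjS hj using fun n => (f n).2
  have hl : (List.ofFn fun n => (f n : R)) = (List.ofFn j).map e := by
    simp [List.map_ofFn, Function.comp_def, hj]
  rw [hl]
  refine list_prod_eq_zero_of_not_nodup e S hanti hsq _ (by simpa using hjS) fun hnd => ?_
  have := Finset.card_le_card_of_injOn (s := Finset.univ) j (fun n _ => hjS n)
    (List.nodup_ofFn.mp hnd).injOn
  rw [Finset.card_univ, Fintype.card_fin] at this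
  omega

lemma mul_eq_neg_mul_of_mem_span (hanti : ∀ i ∈ S, ∀ j ∈ S, e i * e j + e j * e i = 0)
    {A B : R} (hA : A ∈ Submodule.span 𝕜 (e '' S)) (hB : B ∈ Submodule.span 𝕜 (e '' S)) :
    A * B = -(B * A) := by
  induction hA using Submodule.span_induction with
  | mem _ hA =>
    obtain ⟨i, hi, rfl⟩ := hA
    induction hB using Submodule.span_induction with
    | mem _ hB =>
      obtain ⟨j, hj, rfl⟩ := hB
      exact eq_neg_of_add_eq_zero_left (hanti i hi j hj)
    | zero => simp
    | add _ _ _ _ h₁ h₂ => rw [mul_add, h₁, h₂, add_mul, neg_add]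
    | smul a _ _ h => rw [mul_smul_comm, h, smul_neg, smul_mul_assoc]
  | zero => simp
  | add _ _ _ _ h₁ h₂ => rw [add_mul, h₁, h₂, mul_add, neg_add]
  | smul a _ _ h => rw [smul_mul_assoc, h, smul_neg, mul_smul_comm]

end AnticommutingFamily

lemma commute_mul_of_anticommute {R : Type*} [Ring R] {a b c : R} (hb : a * b = -(b * a))
    (hc : a * c = -(c * a)) : Commute a (b * c) := by
  rw [Commute, SemiconjBy, ← mul_assoc, hb, neg_mul, mul_assoc, hc, mul_neg, neg_neg, mul_assoc]

section TruncatedExp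

variable {R : Type*} [Ring R] {A T K : R}

lemma mul_pow_succ_eq_of_mul_eq_add (hAT : A * T = T * A + K) (hKT : Commute K T) (n : ℕ) :
    A * T ^ (n + 1) = T ^ (n + 1) * A + (n + 1) • (T ^ n * K) := by
  induction n with
  | zero => simpa using hAT
  | succ n ih =>
    rw [pow_succ, ← mul_assoc, ih, add_mul, mul_assoc, hAT, smul_mul_assoc, mul_assoc,
      hKT.eq, mul_add, ← mul_assoc, ← pow_succ, ← mul_assoc, ← pow_succ]
    push_cast [add_smul, one_smul]
    abel

variable {𝕜 : Type*} [Field 𝕜] [Algebra 𝕜 R]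

def truncExp (z : 𝕜) (T : R) (N : ℕ) : R :=
  ∑ n ∈ Finset.range (N + 1), (z ^ n / n.factorial) • T ^ n

variable [CharZero 𝕜]

lemma mul_truncExp_eq (hAT : A * T = T * A + K) (hKT : Commute K T) {N : ℕ} (hTN : T ^ N = 0)
    (z : 𝕜) : A * truncExp z T N = truncExp z T N * A + z • (K * truncExp z T N) := by
  have hcoeff : ∀ n : ℕ,
      (z ^ (n + 1) / (n + 1).factorial : 𝕜) * (n + 1) = z * (z ^ n / n.factorial) := by
    intro n
    rw [Nat.factorial_succ, Nat.cast_mul, pow_succ]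
    field_simp
    push_cast
    ring
  rw [truncExp, ← sub_eq_iff_eq_add', Finset.mul_sum, Finset.mul_sum, Finset.sum_mul,
    ← Finset.sum_sub_distrib, Finset.sum_range_succ', Finset.sum_range_succ, hTN, smul_zero,
    mul_zero, add_zero, Finset.smul_sum]
  simp only [mul_smul_comm, smul_mul_assoc, ← smul_sub, mul_pow_succ_eq_of_mul_eq_add hAT hKT,
    add_sub_cancel_left, pow_zero, mul_one, one_mul, sub_self, add_zero, smul_smul,
    (hKT.pow_right _).eq]
  refine Finset.sum_congr rfl fun n _ => ?_
  rw [← Nat.cast_smul_eq_nsmul 𝕜, smul_smul]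
  push_cast
  rw [hcoeff]

end TruncatedExp

section PairSum

variable {ι 𝕜 R : Type*} [CommRing 𝕜] [Ring R] [Algebra 𝕜 R]

def pairSum (S : Finset ι) (F : ι → ι → 𝕜) (e : ι → R) : R :=
  ∑ y ∈ S, ∑ z ∈ S, F y z • (e y * e z)

lemma mul_pairSum_eq [DecidableEq ι] {S : Finset ι} {F : ι → ι → 𝕜} {e : ι → R} {A : R}
    {x : ι} (hx : x ∈ S) (hA : ∀ y ∈ S, A * e y + e y * A = if x = y then 1 else 0)
    (hF : ∀ y ∈ S, F y x = -F x y) :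
    A * pairSum S F e = pairSum S F e * A + (2 : 𝕜) • ∑ z ∈ S, F x z • e z := by
  have hterm : ∀ y ∈ S, ∀ z ∈ S, A * (e y * e z)
      = e y * e z * A + ((if x = y then e z else 0) - if x = z then e y else 0) := by
    intro y hy z hz
    rw [← mul_assoc, eq_sub_of_add_eq (hA y hy), sub_mul, mul_assoc, eq_sub_of_add_eq (hA z hz)]
    simp only [ite_mul, mul_ite, one_mul, mul_one, zero_mul, mul_zero, mul_sub, ← mul_assoc]
    abel
  have hsum : A * pairSum S F e - pairSum S F e * A
      = ∑ y ∈ S, ∑ z ∈ S, F y z • ((if x = y then e z else 0) - if x = z then e y else 0) := by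
    simp only [pairSum, Finset.mul_sum, Finset.sum_mul, ← Finset.sum_sub_distrib]
    refine Finset.sum_congr rfl fun y hy => Finset.sum_congr rfl fun z hz => ?_
    rw [mul_smul_comm, hterm y hy z hz, smul_add, smul_mul_assoc, add_sub_cancel_left]
  rw [← sub_eq_iff_eq_add', hsum]
  simp only [smul_sub, smul_ite, smul_zero, Finset.sum_sub_distrib]
  rw [Finset.sum_comm (s := S) (t := S)]
  simp only [Finset.sum_ite_eq, hx, if_true]
  have hcol : ∑ y ∈ S, F y x • e y = -∑ y ∈ S, F x y • e y := by
    rw [← Finset.sum_neg_distrib]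
    exact Finset.sum_congr rfl fun y hy => by rw [hF y hy, neg_smul]
  rw [hcol, sub_neg_eq_add, two_smul]

lemma pairSum_mem_pow_two {S : Finset ι} {F : ι → ι → 𝕜} {e : ι → R} {Q : Submodule 𝕜 R}
    (he : ∀ y ∈ S, e y ∈ Q) : pairSum S F e ∈ Q ^ 2 :=
  Submodule.sum_mem _ fun y hy => Submodule.sum_mem _ fun z hz =>
    Submodule.smul_mem _ _ (pow_two Q ▸ Submodule.mul_mem_mul (he y hy) (he z hz))

lemma commute_pairSum {S : Finset ι} {F : ι → ι → 𝕜} {e : ι → R} {B : R}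
    (hB : ∀ y ∈ S, B * e y = -(e y * B)) : Commute B (pairSum S F e) :=
  Commute.sum_right _ _ _ fun y hy => Commute.sum_right _ _ _ fun z hz =>
    (commute_mul_of_anticommute (hB y hy) (hB z hz)).smul_right _

end PairSum

lemma wR_mul_wR_succ (δ : ℝ) (u : ℕ) : wR δ u * wR δ (u + 1) = Real.sin δ / 2 := by
  have hsin : Real.sin δ = 2 * Real.sin (δ / 2) * Real.cos (δ / 2) := by
    rw [← Real.sin_two_mul, mul_div_cancel₀ δ two_ne_zero]
  rcases Nat.even_or_odd u with hu | hu
  · simp only [wR, Nat.not_odd_iff_even.mpr hu, hu.add_one, if_true, if_false, hsin]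
    ring
  · simp only [wR, hu, Nat.not_odd_iff_even.mpr hu.add_one, if_true, if_false, hsin]
    ring

def wPartialSum (δ : ℝ) (f : ℕ → Module.End ℂ V) (k : ℕ) : Module.End ℂ V :=
  ∑ y ∈ Finset.Icc 1 k, (wR δ y : ℂ) • f y

section Model

variable {L : ℕ} {δ : ℝ}

lemma wPartialSum_add_sum_Icc (f : ℕ → Module.End ℂ V) {j k : ℕ} (h : j ≤ k) :
    wPartialSum δ f j + ∑ y ∈ Finset.Icc (j + 1) k, (wR δ y : ℂ) • f y = wPartialSum δ f k := by
  simp only [wPartialSum, Finset.Icc_add_one_left_eq_Ioc]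
  exact Finset.sum_Ioc_consecutive _ (Nat.zero_le j) h

-- the definition's separate case `y = L` fits the same formula, as `2 • G - G = G`
lemma taOp_eq (f : ℕ → Module.End ℂ V) {y : ℕ} (hy : y ≤ L) :
    taOp L δ f y = (Real.sin δ : ℂ)⁻¹ • ((2 : ℂ) • wPartialSum δ f y - wPartialSum δ f L) := by
  rw [taOp, ← wPartialSum_add_sum_Icc f hy]
  split_ifs with h
  · subst h
    simp [wPartialSum, two_smul]
  · rw [wPartialSum, two_smul]
    congr 1
    abel

lemma bOp_eq_of_lt (f : ℕ → Module.End ℂ V) {x : ℕ} (hx : 1 ≤ x) (hxL : x < L) :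
    bOp L δ f x = wPartialSum δ f (x + 1) - wPartialSum δ f (x - 1) := by
  rw [bOp, if_neg hxL.ne, ← wPartialSum_add_sum_Icc f (by omega : x - 1 ≤ x + 1),
    Nat.sub_add_cancel hx, Finset.sum_Icc_succ_top (by omega), Finset.Icc_self,
    Finset.sum_singleton]
  abel

lemma bOp_self (f : ℕ → Module.End ℂ V) (hL : 2 ≤ L) :
    bOp L δ f L = wPartialSum δ f L - wPartialSum δ f (L - 1) - wPartialSum δ f 1 := by
  rw [bOp, if_pos rfl, ← wPartialSum_add_sum_Icc f (by omega : L - 1 ≤ L),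
    Nat.sub_add_cancel (by omega : 1 ≤ L), Finset.Icc_self, Finset.sum_singleton]
  simp only [wPartialSum, Finset.Icc_self, Finset.sum_singleton, neg_smul]
  abel

variable {c cdag : ℕ → Module.End ℂ V}

lemma anticomm_wPartialSum
    (hcar : ∀ x ∈ Finset.Icc 1 L, ∀ y ∈ Finset.Icc 1 L,
      cdag x * c y + c y * cdag x = if x = y then 1 else 0)
    {u k : ℕ} (hu : u ∈ Finset.Icc 1 L) (hk : k ≤ L) :
    c u * wPartialSum δ cdag k + wPartialSum δ cdag k * c u
      = (if u ≤ k then (wR δ u : ℂ) else 0) • 1 := by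
  have hterm : ∀ y ∈ Finset.Icc 1 k, c u * ((wR δ y : ℂ) • cdag y) + ((wR δ y : ℂ) • cdag y) * c u
      = if y = u then (wR δ y : ℂ) • 1 else 0 := by
    intro y hy
    rw [mul_smul_comm, smul_mul_assoc, ← smul_add, add_comm,
      hcar y (Finset.Icc_subset_Icc_right hk hy) u hu, smul_ite, smul_zero]
  rw [wPartialSum, Finset.mul_sum, Finset.sum_mul, ← Finset.sum_add_distrib,
    Finset.sum_congr rfl hterm, Finset.sum_ite_eq']
  simp only [Finset.mem_Icc, (Finset.mem_Icc.mp hu).1, true_and, ite_smul, zero_smul]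

lemma aOp_anticomm_wPartialSum
    (hcar : ∀ x ∈ Finset.Icc 1 L, ∀ y ∈ Finset.Icc 1 L,
      cdag x * c y + c y * cdag x = if x = y then 1 else 0)
    {x k : ℕ} (hx : x ∈ Finset.Icc 1 L) (hk : k ∈ Finset.Icc 1 L) :
    aOp L δ c x * wPartialSum δ cdag k + wPartialSum δ cdag k * aOp L δ c x
      = ((Real.sin δ / 2 : ℂ) * ((if x = k then 1 else 0) + (if x = L then 1 else 0))) • 1 := by
  obtain ⟨hx1, hxL⟩ := Finset.mem_Icc.mp hx
  obtain ⟨hk1, hkL⟩ := Finset.mem_Icc.mp hk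
  have hw : ∀ u, (wR δ u : ℂ) * wR δ (u + 1) = Real.sin δ / 2 := fun u => by
    exact_mod_cast wR_mul_wR_succ δ u
  by_cases h : x = L
  · rw [aOp, if_pos h, h]
    have h1 : 1 ∈ Finset.Icc 1 L := Finset.mem_Icc.mpr ⟨le_rfl, by omega⟩
    simp only [add_mul, mul_add, smul_mul_assoc, mul_smul_comm]
    rw [add_add_add_comm, ← smul_add, ← smul_add, anticomm_wPartialSum hcar h1 hkL,
      anticomm_wPartialSum hcar (h ▸ hx) hkL, smul_smul, smul_smul, ← add_smul]
    have hw1 : (wR δ 1 : ℂ) * wR δ 2 = Real.sin δ / 2 := hw 1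
    have hwL := hw (L - 1)
    rw [Nat.sub_add_cancel (by omega : 1 ≤ L)] at hwL
    congr 1
    split_ifs <;> first | omega | linear_combination hw1 + hwL | linear_combination hw1
  · rw [aOp, if_neg h]
    have hx' : x + 1 ∈ Finset.Icc 1 L := Finset.mem_Icc.mpr ⟨by omega, by omega⟩
    simp only [sub_mul, mul_sub, smul_mul_assoc, mul_smul_comm]
    rw [sub_add_sub_comm, ← smul_add, ← smul_add, anticomm_wPartialSum hcar hx hkL,
      anticomm_wPartialSum hcar hx' hkL, smul_smul, smul_smul, ← sub_smul]
    congr 1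
    have hwx := hw x
    split_ifs <;> first | omega | ring1 | linear_combination hwx

lemma aOp_anticomm_taOp (hs : Real.sin δ ≠ 0)
    (hcar : ∀ x ∈ Finset.Icc 1 L, ∀ y ∈ Finset.Icc 1 L,
      cdag x * c y + c y * cdag x = if x = y then 1 else 0)
    {x y : ℕ} (hx : x ∈ Finset.Icc 1 L) (hy : y ∈ Finset.Icc 1 L) :
    aOp L δ c x * taOp L δ cdag y + taOp L δ cdag y * aOp L δ c x = if x = y then 1 else 0 := by
  obtain ⟨hx1, hxL⟩ := Finset.mem_Icc.mp hx
  have hL : L ∈ Finset.Icc 1 L := Finset.right_mem_Icc.mpr (hx1.trans hxL)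
  rw [taOp_eq cdag (Finset.mem_Icc.mp hy).2, mul_smul_comm, smul_mul_assoc, ← smul_add]
  have hexpand : ∀ A G H : Module.End ℂ V, A * ((2 : ℂ) • G - H) + ((2 : ℂ) • G - H) * A
      = (2 : ℂ) • (A * G + G * A) - (A * H + H * A) := by
    intro A G H
    simp only [mul_sub, sub_mul, mul_smul_comm, smul_mul_assoc, smul_add]
    abel
  have hscalar : ∀ a b : ℂ, (Real.sin δ : ℂ)⁻¹ * (2 * (Real.sin δ / 2 * (a + b))
      - Real.sin δ / 2 * (b + b)) = a := fun a b => by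
    have hs' : (Real.sin δ : ℂ) ≠ 0 := by exact_mod_cast hs
    field_simp
    ring
  rw [hexpand, aOp_anticomm_wPartialSum hcar hx hy, aOp_anticomm_wPartialSum hcar hx hL,
    smul_smul, ← sub_smul, smul_smul, hscalar, ite_smul, one_smul, zero_smul]

lemma aOp_apply_eq_zero {Φ0 : V} (hΦ0 : ∀ x ∈ Finset.Icc 1 L, c x Φ0 = 0) {x : ℕ}
    (hx : x ∈ Finset.Icc 1 L) : aOp L δ c x Φ0 = 0 := by
  obtain ⟨hx1, hxL⟩ := Finset.mem_Icc.mp hx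
  by_cases h : x = L
  · simp [aOp, h, hΦ0 1 (Finset.mem_Icc.mpr ⟨le_rfl, by omega⟩), hΦ0 L (h ▸ hx)]
  · simp [aOp, h, hΦ0 x hx, hΦ0 (x + 1) (Finset.mem_Icc.mpr ⟨by omega, by omega⟩)]

lemma Fc_swap (hL : 2 ≤ L) {x y : ℕ} (hx : x ∈ Finset.Icc 1 L) (hy : y ∈ Finset.Icc 1 L) :
    Fc L δ y x = -Fc L δ x y := by
  obtain ⟨hx1, hxL⟩ := Finset.mem_Icc.mp hx
  obtain ⟨hy1, hyL⟩ := Finset.mem_Icc.mp hy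
  simp only [Fc]
  split_ifs <;> first | ring1 | omega

-- `F` is the nearest-neighbour difference on the ring `1, …, L` with antiperiodic boundary
lemma sum_Fc_smul {M : Type*} [AddCommGroup M] [Module ℂ M] (hL : 3 ≤ L) {x : ℕ}
    (hx : x ∈ Finset.Icc 1 L) (v : ℕ → M) :
    ∑ z ∈ Finset.Icc 1 L, Fc L δ x z • v z
      = (Real.sin δ / 2 : ℂ) •
        ((if x = 1 then -v L else v (x - 1)) - (if x = L then -v 1 else v (x + 1))) := by
  obtain ⟨hx1, hxL⟩ := Finset.mem_Icc.mp hx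
  rw [Finset.sum_eq_add_of_mem (if x = 1 then L else x - 1) (if x = L then 1 else x + 1)
    (by split_ifs <;> simp <;> omega) (by split_ifs <;> simp <;> omega)
    (by split_ifs <;> omega)]
  · simp only [Fc]
    split_ifs <;> first | omega | module
  · intro z hz hne
    obtain ⟨hz1, hzL⟩ := Finset.mem_Icc.mp hz
    rw [Fc, if_neg, if_neg, zero_smul] <;> split_ifs at hne <;> omega

lemma sum_Fc_smul_taOp (hs : Real.sin δ ≠ 0) (hL : 3 ≤ L) {x : ℕ} (hx : x ∈ Finset.Icc 1 L) :
    ∑ z ∈ Finset.Icc 1 L, Fc L δ x z • taOp L δ cdag z = -bOp L δ cdag x := by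
  obtain ⟨hx1, hxL⟩ := Finset.mem_Icc.mp hx
  have hhalf : (Real.sin δ / 2 : ℂ) * (Real.sin δ : ℂ)⁻¹ = 1 / 2 := by
    have hs' : (Real.sin δ : ℂ) ≠ 0 := by exact_mod_cast hs
    field_simp
  rw [sum_Fc_smul hL hx]
  rcases (by omega : x = 1 ∨ (1 < x ∧ x < L) ∨ x = L) with h | ⟨h1, hlt⟩ | h
  · rw [if_pos h, if_neg (by omega), h, taOp_eq cdag le_rfl, taOp_eq cdag (by omega : 1 + 1 ≤ L),
      bOp_eq_of_lt cdag le_rfl (by omega),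
      show wPartialSum δ cdag (1 - 1) = 0 from rfl]
    simp only [← smul_neg, ← smul_sub, smul_smul, hhalf]
    module
  · rw [if_neg (by omega), if_neg (by omega), taOp_eq cdag (by omega : x - 1 ≤ L),
      taOp_eq cdag (by omega : x + 1 ≤ L), bOp_eq_of_lt cdag (by omega) hlt]
    simp only [← smul_sub, smul_smul, hhalf]
    module
  · rw [if_neg (by omega), if_pos h, h, taOp_eq cdag (by omega : L - 1 ≤ L),
      taOp_eq cdag (by omega : 1 ≤ L), bOp_self cdag (by omega)]
    simp only [← smul_neg, ← smul_sub, smul_smul, hhalf]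
    module

lemma wPartialSum_mem_span (f : ℕ → Module.End ℂ V) {k : ℕ} (hk : k ≤ L) :
    wPartialSum δ f k ∈ Submodule.span ℂ (f '' Finset.Icc 1 L) :=
  Submodule.sum_mem _ fun y hy => Submodule.smul_mem _ _
    (Submodule.subset_span ⟨y, Finset.Icc_subset_Icc_right hk hy, rfl⟩)

lemma taOp_mem_span (f : ℕ → Module.End ℂ V) {y : ℕ} (hy : y ≤ L) :
    taOp L δ f y ∈ Submodule.span ℂ (f '' Finset.Icc 1 L) := by
  rw [taOp_eq f hy]
  exact Submodule.smul_mem _ _ (sub_mem (Submodule.smul_mem _ _ (wPartialSum_mem_span f hy))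
    (wPartialSum_mem_span f le_rfl))

lemma bOp_mem_span (f : ℕ → Module.End ℂ V) {x : ℕ} (hx : x ∈ Finset.Icc 1 L) :
    bOp L δ f x ∈ Submodule.span ℂ (f '' Finset.Icc 1 L) := by
  obtain ⟨hx1, hxL⟩ := Finset.mem_Icc.mp hx
  have hf : ∀ u ∈ Finset.Icc 1 L, f u ∈ Submodule.span ℂ (f '' Finset.Icc 1 L) :=
    fun u hu => Submodule.subset_span ⟨u, hu, rfl⟩
  rw [bOp]
  split_ifs with h
  · exact add_mem (Submodule.smul_mem _ _ (hf 1 (Finset.mem_Icc.mpr ⟨le_rfl, by omega⟩)))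
      (Submodule.smul_mem _ _ (hf L (h ▸ hx)))
  · exact add_mem (Submodule.smul_mem _ _ (hf x hx))
      (Submodule.smul_mem _ _ (hf (x + 1) (Finset.mem_Icc.mpr ⟨by omega, by omega⟩)))

lemma zetaDag_pow_eq_zero (hL : 1 ≤ L)
    (hdd : ∀ x ∈ Finset.Icc 1 L, ∀ y ∈ Finset.Icc 1 L, cdag x * cdag y + cdag y * cdag x = 0) :
    zetaDag L δ cdag ^ L = 0 := by
  have hsq : ∀ x ∈ Finset.Icc 1 L, cdag x * cdag x = 0 := fun x hx => by
    have h := hdd x hx x hx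
    rw [← two_smul ℂ] at h
    exact (smul_eq_zero.mp h).resolve_left two_ne_zero
  have hζ : zetaDag L δ cdag ∈ Submodule.span ℂ (cdag '' Finset.Icc 1 L) ^ 2 :=
    pairSum_mem_pow_two fun y hy => taOp_mem_span cdag (Finset.mem_Icc.mp hy).2
  have hmem := Submodule.pow_mem_pow _ hζ L
  rwa [← pow_mul, span_image_pow_eq_bot cdag _ hdd hsq (by simp; omega), Submodule.mem_bot] at hmem

lemma aOp_mul_zetaDag (hs : Real.sin δ ≠ 0) (hL : 3 ≤ L)
    (hcar : ∀ x ∈ Finset.Icc 1 L, ∀ y ∈ Finset.Icc 1 L,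
      cdag x * c y + c y * cdag x = if x = y then 1 else 0)
    {x : ℕ} (hx : x ∈ Finset.Icc 1 L) :
    aOp L δ c x * zetaDag L δ cdag
      = zetaDag L δ cdag * aOp L δ c x + (2 : ℂ) • -bOp L δ cdag x := by
  have h := mul_pairSum_eq (F := Fc L δ) hx (fun y hy => aOp_anticomm_taOp hs hcar hx hy)
    (fun y hy => Fc_swap (by omega) hx hy)
  rwa [sum_Fc_smul_taOp hs hL hx] at h

lemma commute_bOp_zetaDag
    (hdd : ∀ x ∈ Finset.Icc 1 L, ∀ y ∈ Finset.Icc 1 L, cdag x * cdag y + cdag y * cdag x = 0)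
    {x : ℕ} (hx : x ∈ Finset.Icc 1 L) : Commute (bOp L δ cdag x) (zetaDag L δ cdag) :=
  commute_pairSum fun _ hy => mul_eq_neg_mul_of_mem_span cdag _ hdd (bOp_mem_span cdag hx)
    (taOp_mem_span cdag (Finset.mem_Icc.mp hy).2)

lemma aOp_PhiG0 (hs : Real.sin δ ≠ 0) (hL : 3 ≤ L)
    (hdd : ∀ x ∈ Finset.Icc 1 L, ∀ y ∈ Finset.Icc 1 L, cdag x * cdag y + cdag y * cdag x = 0)
    (hcar : ∀ x ∈ Finset.Icc 1 L, ∀ y ∈ Finset.Icc 1 L,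
      cdag x * c y + c y * cdag x = if x = y then 1 else 0)
    {Φ0 : V} (hΦ0 : ∀ x ∈ Finset.Icc 1 L, c x Φ0 = 0) (η θ : ℝ) {x : ℕ}
    (hx : x ∈ Finset.Icc 1 L) :
    aOp L δ c x (PhiG0 L δ η θ cdag Φ0)
      = ((η : ℂ) * Complex.exp (-(θ : ℂ) * Complex.I)) •
          bOp L δ cdag x (PhiG0 L δ η θ cdag Φ0) := by
  have h := congrArg (· Φ0) (mul_truncExp_eq (aOp_mul_zetaDag hs hL hcar hx)
    (((commute_bOp_zetaDag hdd hx).neg_left).smul_left (2 : ℂ))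
    (zetaDag_pow_eq_zero (by omega) hdd)
    ((-(η / 2 : ℝ) : ℂ) * Complex.exp (-(θ : ℂ) * Complex.I)))
  simp only [Module.End.mul_apply, LinearMap.add_apply, LinearMap.smul_apply, LinearMap.neg_apply,
    aOp_apply_eq_zero hΦ0 hx, map_zero, zero_add] at h
  rw [PhiG0, ← truncExp, h]
  match_scalars
  ring

lemma aOp_PhiG1 (hs : Real.sin δ ≠ 0) (hL : 3 ≤ L)
    (hdd : ∀ x ∈ Finset.Icc 1 L, ∀ y ∈ Finset.Icc 1 L, cdag x * cdag y + cdag y * cdag x = 0)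
    (hcar : ∀ x ∈ Finset.Icc 1 L, ∀ y ∈ Finset.Icc 1 L,
      cdag x * c y + c y * cdag x = if x = y then 1 else 0)
    {Φ0 : V} (hΦ0 : ∀ x ∈ Finset.Icc 1 L, c x Φ0 = 0) (η θ : ℝ) {x : ℕ}
    (hx : x ∈ Finset.Icc 1 L) :
    aOp L δ c x (PhiG1 L δ η θ cdag Φ0)
      = ((η : ℂ) * Complex.exp (-(θ : ℂ) * Complex.I)) • bOp L δ cdag x (PhiG1 L δ η θ cdag Φ0)
        + ((if x = L then 1 else 0) * (Real.sqrt (2 * η * Real.sin δ) : ℂ)) •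
          PhiG0 L δ η θ cdag Φ0 := by
  have hL' : L ∈ Finset.Icc 1 L := Finset.right_mem_Icc.mpr (by omega)
  have hanti := congrArg (· (PhiG0 L δ η θ cdag Φ0)) (aOp_anticomm_taOp hs hcar hx hL')
  have hba := congrArg (· (PhiG0 L δ η θ cdag Φ0)) (mul_eq_neg_mul_of_mem_span (𝕜 := ℂ) cdag _
    hdd (taOp_mem_span (δ := δ) cdag le_rfl) (bOp_mem_span (δ := δ) cdag hx))
  simp only [Module.End.mul_apply, LinearMap.add_apply, LinearMap.neg_apply,
    aOp_PhiG0 hs hL hdd hcar hΦ0 η θ hx, map_smul] at hanti hba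
  rw [PhiG1, map_smul, map_smul, eq_sub_of_add_eq hanti, hba]
  split_ifs <;> simp only [Module.End.one_apply, LinearMap.zero_apply, smul_sub, smul_neg,
    smul_smul] <;> module

end Model

theorem statement11_general (L : ℕ) (hL3 : 3 ≤ L)
    (δ : ℝ) (hδ0 : 0 < δ) (hδ1 : δ ≤ Real.pi / 2)
    (η θ : ℝ)
    (c cdag : ℕ → Module.End ℂ V)
    (car_dd : ∀ x ∈ Finset.Icc 1 L, ∀ y ∈ Finset.Icc 1 L,
      cdag x * cdag y + cdag y * cdag x = 0)
    (car_dc : ∀ x ∈ Finset.Icc 1 L, ∀ y ∈ Finset.Icc 1 L,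
      cdag x * c y + c y * cdag x = if x = y then 1 else 0)
    (Φ0 : V) (hΦ0 : ∀ x ∈ Finset.Icc 1 L, c x Φ0 = 0) :
    ∀ x ∈ Finset.Icc 1 L,
      Complex.exp ((θ : ℂ) * Complex.I / 2) • aOp L δ c x (PhiG0 L δ η θ cdag Φ0)
        = ((η : ℂ) * Complex.exp (-(θ : ℂ) * Complex.I / 2)) •
            bOp L δ cdag x (PhiG0 L δ η θ cdag Φ0)
      ∧ Complex.exp ((θ : ℂ) * Complex.I / 2) • aOp L δ c x (PhiG1 L δ η θ cdag Φ0)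
        = ((η : ℂ) * Complex.exp (-(θ : ℂ) * Complex.I / 2)) •
            bOp L δ cdag x (PhiG1 L δ η θ cdag Φ0)
          + ((if x = L then (1 : ℂ) else 0) * (Real.sqrt (2 * η * Real.sin δ) : ℂ)
              * Complex.exp ((θ : ℂ) * Complex.I / 2)) • PhiG0 L δ η θ cdag Φ0 := by
  have hs : Real.sin δ ≠ 0 :=
    (Real.sin_pos_of_pos_of_lt_pi hδ0 (hδ1.trans_lt (by linarith [Real.pi_pos]))).ne'
  have hphase : Complex.exp ((θ : ℂ) * Complex.I / 2)
      * ((η : ℂ) * Complex.exp (-(θ : ℂ) * Complex.I))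
      = (η : ℂ) * Complex.exp (-(θ : ℂ) * Complex.I / 2) := by
    rw [mul_left_comm, ← Complex.exp_add]
    ring_nf
  intro x hx
  constructor
  · rw [aOp_PhiG0 hs hL3 car_dd car_dc hΦ0 η θ hx, smul_smul, hphase]
  · rw [aOp_PhiG1 hs hL3 car_dd car_dc hΦ0 η θ hx, smul_add, smul_smul, smul_smul, hphase,
      mul_comm (Complex.exp _)]

/-- for every `x ∈ {1,…,L}`,
`e^{iθ/2} a_x Φ_{G,0} = η e^{−iθ/2} b_x† Φ_{G,0}` and
`e^{iθ/2} a_x Φ_{G,1} = η e^{−iθ/2} b_x† Φ_{G,1} + δ_{x,L} √(2η sin δ) e^{iθ/2} Φ_{G,0}`. -/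
theorem statement11 (L : ℕ) (hL3 : 3 ≤ L) (hLodd : Odd L)
    (δ : ℝ) (hδ0 : 0 < δ) (hδ1 : δ ≤ Real.pi / 2)
    (η θ : ℝ) (hη : 0 < η)
    (c cdag : ℕ → Module.End ℂ V)
    (car_cc : ∀ x ∈ Finset.Icc 1 L, ∀ y ∈ Finset.Icc 1 L, c x * c y + c y * c x = 0)
    (car_dd : ∀ x ∈ Finset.Icc 1 L, ∀ y ∈ Finset.Icc 1 L,
      cdag x * cdag y + cdag y * cdag x = 0)
    (car_dc : ∀ x ∈ Finset.Icc 1 L, ∀ y ∈ Finset.Icc 1 L,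
      cdag x * c y + c y * cdag x = if x = y then 1 else 0)
    (Φ0 : V) (hΦ0 : ∀ x ∈ Finset.Icc 1 L, c x Φ0 = 0) :
    ∀ x ∈ Finset.Icc 1 L,
      Complex.exp ((θ : ℂ) * Complex.I / 2) • aOp L δ c x (PhiG0 L δ η θ cdag Φ0)
        = ((η : ℂ) * Complex.exp (-(θ : ℂ) * Complex.I / 2)) •
            bOp L δ cdag x (PhiG0 L δ η θ cdag Φ0)
      ∧ Complex.exp ((θ : ℂ) * Complex.I / 2) • aOp L δ c x (PhiG1 L δ η θ cdag Φ0)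
        = ((η : ℂ) * Complex.exp (-(θ : ℂ) * Complex.I / 2)) •
            bOp L δ cdag x (PhiG1 L δ η θ cdag Φ0)
          + ((if x = L then (1 : ℂ) else 0) * (Real.sqrt (2 * η * Real.sin δ) : ℂ)
              * Complex.exp ((θ : ℂ) * Complex.I / 2)) • PhiG0 L δ η θ cdag Φ0 :=
  statement11_general L hL3 δ hδ0 hδ1 η θ c cdag car_dd car_dc Φ0 hΦ0
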